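/- Let λ, μ, θ, δ be real numbers with cos θ ≠ 0. Define a = λ cos²θ + μ sin²θ. If a − μ ≥ δ then λ − μ = (a − μ)/cos²θ ≥ a − μ ≥ δ. In particular, in the setting L₁₁ = λΓ² + ΣΛ₂Σ with Γ = diag(cos θᵢ), Σ = diag(sin θᵢ) and Λ₂ diagonal, if the i-th diagonal entry satisfies (L₁₁)_{ii} − (Λ₂)_{ii} ≥ δ > 0, then the eigengap satisfies λ − (Λ₂)_{ii} = ((L₁₁)_{ii} − (Λ₂)_{ii})/cos²θᵢ ≥ (L₁₁)_{ii} − (Λ₂)_{ii} ≥ δ. -/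

import Mathlib

/-! Since `sin²θ = 1 - cos²θ`, the Rayleigh quotient `a = λ cos²θ + μ sin²θ` satisfies
`a - μ = (λ - μ) cos²θ`; dividing by `cos²θ ∈ (0, 1]` can only enlarge the nonnegative gap `a - μ`. -/

theorem mul_cos_sq_add_mul_sin_sq_sub (lam mu θ : ℝ) :
    lam * Real.cos θ ^ 2 + mu * Real.sin θ ^ 2 - mu = (lam - mu) * Real.cos θ ^ 2 := by
  rw [Real.sin_sq]
  ring

/-- Theorem 9: For real `λ, μ, θ, δ` with `cos θ ≠ 0` and
`a = λ cos²θ + μ sin²θ`, if `a − μ ≥ δ > 0` then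
`λ − μ = (a − μ)/cos²θ ≥ a − μ ≥ δ`: the eigengap is larger than the gap between
the eigenvalues of the perturbed space. -/
theorem eigengap_ge_perturbed_gap
    (lam mu θ δ a : ℝ) (hcos : Real.cos θ ≠ 0)
    (ha : a = lam * Real.cos θ ^ 2 + mu * Real.sin θ ^ 2)
    (hδ : 0 < δ) (h : a - mu ≥ δ) :
    lam - mu = (a - mu) / Real.cos θ ^ 2 ∧
    (a - mu) / Real.cos θ ^ 2 ≥ a - mu ∧
    lam - mu ≥ δ := by
  have hcos_sq_pos : 0 < Real.cos θ ^ 2 := by positivity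
  have hgap : lam - mu = (a - mu) / Real.cos θ ^ 2 := by
    rw [ha, mul_cos_sq_add_mul_sin_sq_sub, mul_div_cancel_right₀ _ hcos_sq_pos.ne']
  have hdiv : (a - mu) / Real.cos θ ^ 2 ≥ a - mu :=
    le_div_self (by linarith) hcos_sq_pos (Real.cos_sq_le_one θ)
  exact ⟨hgap, hdiv, by linarith⟩
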